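/- Let K ⊆ ℍ^A and f : ℍ^A → ℍ^A, and suppose there is c₀ < 1 such that γ_A(f(g), f(h)) ≤ c₀ γ_A(g,h) for all g, h ∈ K, and suppose γ_A is bounded on K × K by some R (e.g. K compact). Then there is c₁ < 1 such that dist(f(g), f(h)) ≤ c₁ dist(g,h) for all g, h ∈ K, where dist(g,h) = cosh⁻¹(γ_A(g,h)/2 + 1). -/

import Mathlib

open Complex

/-- Inverse hyperbolic cosine: `cosh⁻¹(x) = log (x + √(x² - 1))` for `x ≥ 1`. -/
noncomputable def arcosh (x : ℝ) : ℝ := Real.log (x + Real.sqrt (x^2 - 1))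

/-- `γ(a,b) = |a-b|² / (Im a · Im b)` on the upper half-plane. -/
noncomputable def gam (a b : ℂ) : ℝ := ‖a - b‖^2 / (a.im * b.im)

/-- `γ_A(g,h) = max_j γ(g_j,h_j)`. -/
noncomputable def gamA {A : Type*} [Fintype A] [Nonempty A] (g h : A → ℂ) : ℝ :=
  Finset.univ.sup' Finset.univ_nonempty (fun j => gam (g j) (h j))

/-!
Write `cosh⁻¹(t + 1) = log (1 + u)` with `u = e^{cosh⁻¹(t + 1)} - 1 = t + √(t² + 2t)`.
Shrinking `t` by the factor `c₀` shrinks `u` at least by `a = √c₀`, and since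
`u ↦ log (1 + a u) / log (1 + u)` is increasing (concavity of `v ↦ v ^ c`), the bound `u ≤ U`
coming from `γ_A ≤ R` gives `c₁ = log (1 + a U) / log (1 + U) < 1`.
-/

namespace Real

lemma exp_arcosh_sub_one_le_mul {a x y : ℝ} (ha0 : 0 ≤ a) (ha1 : a ≤ 1) (hx : 1 ≤ x)
    (hy : 1 ≤ y) (hyx : y - 1 ≤ a ^ 2 * (x - 1)) :
    exp (arcosh y) - 1 ≤ a * (exp (arcosh x) - 1) := by
  rw [exp_arcosh hx, exp_arcosh hy]
  have ha2 : a ^ 2 ≤ a := by nlinarith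
  have hlin : y - 1 ≤ a * (x - 1) := hyx.trans (by nlinarith)
  have hsqrt : √(y ^ 2 - 1) ≤ a * √(x ^ 2 - 1) := by
    rw [← sqrt_sq ha0, ← sqrt_mul (sq_nonneg a)]
    exact sqrt_le_sqrt (by nlinarith)
  linarith

lemma log_one_add_mul_le_div_mul_log_one_add {a u U : ℝ} (ha0 : 0 ≤ a) (ha1 : a ≤ 1)
    (hu : 0 ≤ u) (huU : u ≤ U) :
    log (1 + a * u) ≤ log (1 + a * U) / log (1 + U) * log (1 + u) := by
  rcases hu.eq_or_lt with rfl | hu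
  · simp
  have hU : 0 < U := hu.trans_le huU
  set c := log (1 + a * U) / log (1 + U)
  have hlogU : 0 < log (1 + U) := log_pos (by linarith)
  have hc0 : 0 ≤ c := div_nonneg (log_nonneg (by nlinarith)) hlogU.le
  have hc1 : c ≤ 1 :=
    div_le_one_of_le₀ (log_le_log (by positivity) (by nlinarith)) hlogU.le
  have hpow : (1 + U) ^ c = 1 + a * U := by
    rw [rpow_def_of_pos (by linarith), mul_div_cancel₀ _ hlogU.ne', exp_log (by positivity)]
  -- `1 + a u` lies on the chord of the concave `v ↦ v ^ c` between `v = 1` and `v = 1 + U`.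
  have hchord : 1 + a * u ≤ (1 + u) ^ c := by
    have h := (concaveOn_rpow hc0 hc1).2 (Set.mem_Ici.2 zero_le_one)
      (Set.mem_Ici.2 (by linarith : (0 : ℝ) ≤ 1 + U))
      (sub_nonneg.2 (div_le_one_of_le₀ huU hU.le)) (div_nonneg hu.le hU.le) (sub_add_cancel _ _)
    have hpoint : (1 - u / U) * 1 + u / U * (1 + U) = 1 + u := by field_simp; ring
    have hvalue : (1 - u / U) * 1 + u / U * (1 + a * U) = 1 + a * u := by field_simp; ring
    simpa only [smul_eq_mul, one_rpow, hpow, hpoint, hvalue] using h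
  calc log (1 + a * u) ≤ log ((1 + u) ^ c) := log_le_log (by positivity) hchord
    _ = c * log (1 + u) := log_rpow (by linarith) c

theorem exists_arcosh_le_mul_arcosh {c₀ : ℝ} (hc₀0 : 0 ≤ c₀) (hc₀ : c₀ < 1) (T : ℝ) :
    ∃ c₁ < 1, ∀ x y, 1 ≤ x → x ≤ T → 1 ≤ y → y - 1 ≤ c₀ * (x - 1) →
      arcosh y ≤ c₁ * arcosh x := by
  set a := √c₀
  have ha0 : 0 ≤ a := sqrt_nonneg c₀
  have ha1 : a < 1 := by simpa using sqrt_lt_sqrt hc₀0 hc₀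
  set U := max (exp (arcosh T) - 1) 1
  have hU : 1 ≤ U := le_max_right _ _
  refine ⟨log (1 + a * U) / log (1 + U), ?_, fun x y hx hxT hy hyx => ?_⟩
  · rw [div_lt_one (log_pos (by linarith))]
    exact log_lt_log (by positivity) (by nlinarith)
  have hu : 0 ≤ exp (arcosh x) - 1 := by linarith [one_le_exp (arcosh_nonneg hx)]
  have huU : exp (arcosh x) - 1 ≤ U := le_max_of_le_left <| by
    gcongr
    exact (arcosh_le_arcosh (by linarith) (by linarith)).2 hxT
  have hyx' : y - 1 ≤ a ^ 2 * (x - 1) := by rwa [sq_sqrt hc₀0]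
  calc arcosh y = log (1 + (exp (arcosh y) - 1)) := by rw [add_sub_cancel, log_exp]
    _ ≤ log (1 + a * (exp (arcosh x) - 1)) :=
        log_le_log (by linarith [exp_pos (arcosh y)])
          (by linarith [exp_arcosh_sub_one_le_mul ha0 ha1.le hx hy hyx'])
    _ ≤ log (1 + a * U) / log (1 + U) * log (1 + (exp (arcosh x) - 1)) :=
        log_one_add_mul_le_div_mul_log_one_add ha0 ha1.le hu huU
    _ = log (1 + a * U) / log (1 + U) * arcosh x := by rw [add_sub_cancel, log_exp]

end Real

lemma gam_nonneg {a b : ℂ} (hab : 0 ≤ a.im * b.im) : 0 ≤ gam a b :=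
  div_nonneg (sq_nonneg _) hab

lemma gamA_nonneg {A : Type*} [Fintype A] [Nonempty A] {g h : A → ℂ}
    (hg : ∀ j, 0 < (g j).im) (hh : ∀ j, 0 < (h j).im) : 0 ≤ gamA g h :=
  let ⟨j⟩ := ‹Nonempty A›
  Finset.le_sup'_of_le _ (Finset.mem_univ j) (gam_nonneg (mul_pos (hg j) (hh j)).le)

/-- If `f` contracts `γ_A` on `K` by a factor `c₀ < 1` and `γ_A` is bounded on `K × K`,
then `f` contracts the metric `dist(g,h) = cosh⁻¹(γ_A(g,h)/2 + 1)` on `K` by some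
factor `c₁ < 1`. -/
theorem contraction_gamA_to_dist {A : Type*} [Fintype A] [Nonempty A]
    (K : Set (A → ℂ)) (hK : ∀ g ∈ K, ∀ j, 0 < (g j).im)
    (f : (A → ℂ) → (A → ℂ)) (hf : ∀ g ∈ K, ∀ j, 0 < (f g j).im)
    (c₀ : ℝ) (hc₀0 : 0 ≤ c₀) (hc₀ : c₀ < 1)
    (hcontr : ∀ g ∈ K, ∀ h ∈ K, gamA (f g) (f h) ≤ c₀ * gamA g h)
    (R : ℝ) (hbdd : ∀ g ∈ K, ∀ h ∈ K, gamA g h ≤ R) :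
    ∃ c₁ : ℝ, c₁ < 1 ∧ ∀ g ∈ K, ∀ h ∈ K,
      arcosh (gamA (f g) (f h) / 2 + 1) ≤ c₁ * arcosh (gamA g h / 2 + 1) := by
  -- `arcosh` unfolds to Mathlib's `Real.arcosh`, so `hle` applies to it directly.
  obtain ⟨c₁, hc₁, hle⟩ := Real.exists_arcosh_le_mul_arcosh hc₀0 hc₀ (R / 2 + 1)
  refine ⟨c₁, hc₁, fun g hg h hh => hle _ _ ?_ ?_ ?_ ?_⟩
  · linarith [gamA_nonneg (hK g hg) (hK h hh)]
  · linarith [hbdd g hg h hh]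
  · linarith [gamA_nonneg (hf g hg) (hf h hh)]
  · linarith [hcontr g hg h hh]
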